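/- Let M be a rank-r spike with tip t, and let P₁ = (R₁,B₁), P₂ = (R₂,B₂) be compatible pairs of disjoint bases with R₁ ∪ B₁ = S − t, where R₁ and R₂ are both non-transversal bases with R₁ ⊇ {x₁,y₁}, B₁ ⊇ {x_r,y_r}, R₂ ⊇ {x_r,y_r}, B₂ ⊇ {x₁,y₁}, and x_i has the same color in P₁ and P₂ for all 2 ≤ i ≤ r−1. If r ≥ 3 and all of x₂,…,x_{r−1} are red in P₁, and w(y₂) ≤ w(x₂), then the exchange sequence (x₁,y₂),(y₁,x_r),(y₂,y_r) is feasible, has length 3 ≤ r, and has total weight at most w(S − t). -/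

import Mathlib

/-!
An `r`-subset of `S − t` that contains both elements of exactly one leg contains no circuit of the
spike: a circuit from `C3` would be the whole set, yet meets every leg once; a four-element
circuit needs two full legs; the triangles contain `t`. Since every `(r + 1)`-subset of the
ground set is dependent, such a set is a basis. The hypotheses force
`R₁ = {y₁} ∪ {xᵢ : i ≠ r}` and `R₂ = {y_r} ∪ {xᵢ : i ≠ 1}`, with `B₁`, `B₂` their complements in
`S − t`, and every intermediate pair of the exchange sequence consists of two sets of this kind.
The weight bound holds because the sequence uses `y₂` twice and `x₂` never, and `w y₂ ≤ w x₂`.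
-/

open Set Matroid

variable {α : Type*}

/-- `C` is a circuit of `M`: a minimal dependent subset of the ground set. -/
def IsCircuitOf (M : Matroid α) (C : Set α) : Prop :=
  C ⊆ M.E ∧ ¬ M.Indep C ∧ ∀ D, D ⊂ C → M.Indep D

/-- `M` is a rank-`r` spike with tip `t`, legs `{x i, y i}` and extra circuit family
`C3`: the ground set is `{t, x 1, y 1, …, x r, y r}` (all elements distinct), and the
circuits of `M` are exactly the sets `{t, x i, y i}`, the sets `{x i, y i, x j, y j}` for
`i ≠ j`, the members of `C3` (which are transversals of the legs of size `r` avoiding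
`t`), and all `(r + 1)`-element subsets of the ground set containing none of these. -/
structure IsSpike (M : Matroid α) (r : ℕ) (t : α) (x y : Fin r → α)
    (C3 : Set (Set α)) : Prop where
  hr : 3 ≤ r
  inj : Function.Injective fun p : Fin r × Bool => if p.2 then x p.1 else y p.1
  htx : ∀ i, t ≠ x i
  hty : ∀ i, t ≠ y i
  ground : M.E = insert t (⋃ i, {x i, y i})
  hC3 : ∀ C ∈ C3, C ⊆ (⋃ i, {x i, y i}) ∧ C.ncard = r ∧
    ∀ i, (C ∩ {x i, y i}).ncard = 1
  circuits : ∀ C : Set α, IsCircuitOf M C ↔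
    (∃ i, C = {t, x i, y i}) ∨
    (∃ i j, i ≠ j ∧ C = ({x i, y i, x j, y j} : Set α)) ∨
    C ∈ C3 ∨
    (C ⊆ M.E ∧ C.ncard = r + 1 ∧
      (∀ i, ¬ ({t, x i, y i} : Set α) ⊆ C) ∧
      (∀ i j, i ≠ j → ¬ ({x i, y i, x j, y j} : Set α) ⊆ C) ∧
      ∀ C' ∈ C3, ¬ C' ⊆ C)

/-- `SymExchSeq M P L Q` : the list `L` of pairs `(e, f)` records a sequence of feasible
symmetric exchanges transforming the pair of disjoint bases `P` into `Q`. -/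
def SymExchSeq (M : Matroid α) : Set α × Set α → List (α × α) → Set α × Set α → Prop
  | P, [], Q => P = Q
  | P, (e, f) :: L, Q =>
      ∃ P' : Set α × Set α, e ∈ P.1 ∧ f ∈ P.2 ∧
        P'.1 = insert f (P.1 \ {e}) ∧ P'.2 = insert e (P.2 \ {f}) ∧
        M.IsBase P'.1 ∧ M.IsBase P'.2 ∧ SymExchSeq M P' L Q

/-- The total weight of a sequence of symmetric exchanges. -/
def seqWeight (w : α → NNReal) (L : List (α × α)) : NNReal :=
  (L.map fun p => w p.1 + w p.2).sum

/-- The number of times an exchange sequence uses the element `a`. -/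
def usesCount [DecidableEq α] (L : List (α × α)) (a : α) : ℕ :=
  (L.map Prod.fst).count a + (L.map Prod.snd).count a

def legSet {r : ℕ} (x y : Fin r → α) (I J : Finset (Fin r)) : Set α :=
  x '' I ∪ y '' J

section LegSet

variable {r : ℕ} {x y : Fin r → α} {I J : Finset (Fin r)}

lemma legSet_subset_iff {Z : Set α} :
    legSet x y I J ⊆ Z ↔ (∀ i ∈ I, x i ∈ Z) ∧ ∀ j ∈ J, y j ∈ Z := by
  simp only [legSet, union_subset_iff, image_subset_iff]
  rfl

lemma finite_legSet : (legSet x y I J).Finite :=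
  (I.finite_toSet.image x).union (J.finite_toSet.image y)

lemma insert_x_legSet (a : Fin r) : insert (x a) (legSet x y I J) = legSet x y (insert a I) J := by
  rw [legSet, legSet, Finset.coe_insert, image_insert_eq, insert_union]

lemma insert_y_legSet (a : Fin r) : insert (y a) (legSet x y I J) = legSet x y I (insert a J) := by
  rw [legSet, legSet, Finset.coe_insert, image_insert_eq, union_insert]

end LegSet

lemma Matroid.IsCircuit.isCircuitOf {M : Matroid α} {C : Set α} (hC : M.IsCircuit C) :
    IsCircuitOf M C :=
  ⟨hC.subset_ground, hC.not_indep, fun _ hD => hC.ssubset_indep hD⟩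

lemma symExchSeq_cons {M : Matroid α} {R B R' B' : Set α} {Q : Set α × Set α} {e f : α}
    {L : List (α × α)} (he : e ∈ R) (hf : f ∈ B) (hR' : insert f (R \ {e}) = R')
    (hB' : insert e (B \ {f}) = B') (hR'base : M.IsBase R') (hB'base : M.IsBase B')
    (hL : SymExchSeq M (R', B') L Q) : SymExchSeq M (R, B) ((e, f) :: L) Q :=
  ⟨(R', B'), he, hf, hR'.symm, hB'.symm, hR'base, hB'base, hL⟩

lemma seqWeight_le_sum {ι : Type*} [Fintype ι] [DecidableEq ι] (x y : ι → α) (w : α → NNReal)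
    {a b l : ι} (hab : a ≠ b) (hal : a ≠ l) (hbl : b ≠ l) (hw : w (y b) ≤ w (x b)) :
    seqWeight w [(x a, y b), (y a, x l), (y b, y l)] ≤ ∑ i, (w (x i) + w (y i)) := calc
  seqWeight w [(x a, y b), (y a, x l), (y b, y l)]
      = w (x a) + w (y b) + (w (y a) + w (x l)) + (w (y b) + w (y l)) := by
    simp only [seqWeight, List.map_cons, List.map_nil, List.sum_cons, List.sum_nil, add_zero,
      add_assoc]
  _ ≤ w (x a) + w (y a) + (w (x b) + w (y b) + (w (x l) + w (y l))) := by
    rw [← NNReal.coe_le_coe]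
    push_cast
    linarith [NNReal.coe_le_coe.2 hw]
  _ = ∑ i ∈ {a, b, l}, (w (x i) + w (y i)) := by
    rw [Finset.sum_insert (by simp [hab, hal]), Finset.sum_pair hbl]
  _ ≤ ∑ i, (w (x i) + w (y i)) := Finset.sum_le_sum_of_subset (Finset.subset_univ _)

namespace IsSpike

variable {M : Matroid α} {r : ℕ} {t : α} {x y : Fin r → α} {C3 : Set (Set α)}
  {I J : Finset (Fin r)}

lemma x_injective (hM : IsSpike M r t x y C3) : Function.Injective x :=
  fun i j h => congrArg Prod.fst (@hM.inj (i, true) (j, true) h)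

lemma y_injective (hM : IsSpike M r t x y C3) : Function.Injective y :=
  fun i j h => congrArg Prod.fst (@hM.inj (i, false) (j, false) h)

lemma x_ne_y (hM : IsSpike M r t x y C3) (i j : Fin r) : x i ≠ y j :=
  fun h => Bool.noConfusion <| congrArg Prod.snd (@hM.inj (i, true) (j, false) h)

lemma disjoint_image_x_image_y (hM : IsSpike M r t x y C3) (I J : Set (Fin r)) :
    Disjoint (x '' I) (y '' J) := by
  rw [Set.disjoint_left]
  rintro _ ⟨i, -, rfl⟩ ⟨j, -, h⟩
  exact hM.x_ne_y i j h.symm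

lemma x_mem_legSet (hM : IsSpike M r t x y C3) {k : Fin r} : x k ∈ legSet x y I J ↔ k ∈ I := by
  simp [legSet, hM.x_injective.eq_iff, (hM.x_ne_y _ _).symm]

lemma y_mem_legSet (hM : IsSpike M r t x y C3) {k : Fin r} : y k ∈ legSet x y I J ↔ k ∈ J := by
  simp [legSet, hM.y_injective.eq_iff, hM.x_ne_y]

lemma legSet_sdiff_x (hM : IsSpike M r t x y C3) (a : Fin r) :
    legSet x y I J \ {x a} = legSet x y (I.erase a) J := by
  rw [legSet, legSet, union_sdiff_distrib, Finset.coe_erase, image_sdiff hM.x_injective,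
    image_singleton, sdiff_singleton_eq_self (s := y '' J) fun ⟨_, _, h⟩ => hM.x_ne_y a _ h.symm]

lemma legSet_sdiff_y (hM : IsSpike M r t x y C3) (a : Fin r) :
    legSet x y I J \ {y a} = legSet x y I (J.erase a) := by
  rw [legSet, legSet, union_sdiff_distrib, Finset.coe_erase, image_sdiff hM.y_injective,
    image_singleton, sdiff_singleton_eq_self (s := x '' I) fun ⟨_, _, h⟩ => hM.x_ne_y _ a h]

lemma ncard_legSet (hM : IsSpike M r t x y C3) : (legSet x y I J).ncard = I.card + J.card := by
  rw [legSet, ncard_union_eq (hM.disjoint_image_x_image_y _ _),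
    ncard_image_of_injective _ hM.x_injective, ncard_image_of_injective _ hM.y_injective,
    ncard_coe_finset, ncard_coe_finset]

lemma finsum_mem_legSet {β : Type*} [AddCommMonoid β] (hM : IsSpike M r t x y C3) (w : α → β) :
    ∑ᶠ a ∈ legSet x y I J, w a = ∑ i ∈ I, w (x i) + ∑ j ∈ J, w (y j) := by
  rw [legSet, finsum_mem_union (hM.disjoint_image_x_image_y _ _) (I.finite_toSet.image x)
    (J.finite_toSet.image y), finsum_mem_image hM.x_injective.injOn,
    finsum_mem_image hM.y_injective.injOn, finsum_mem_coe_finset, finsum_mem_coe_finset]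

lemma legSet_univ (hM : IsSpike M r t x y C3) :
    legSet x y Finset.univ Finset.univ = M.E \ {t} := by
  ext a
  simp only [legSet, Finset.coe_univ, image_univ, hM.ground, mem_sdiff, mem_insert_iff,
    mem_iUnion, mem_singleton_iff, mem_union, mem_range]
  constructor
  · rintro (⟨i, rfl⟩ | ⟨i, rfl⟩)
    · exact ⟨Or.inr ⟨i, Or.inl rfl⟩, (hM.htx i).symm⟩
    · exact ⟨Or.inr ⟨i, Or.inr rfl⟩, (hM.hty i).symm⟩
  · rintro ⟨(rfl | ⟨i, rfl | rfl⟩), ht⟩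
    · exact absurd rfl ht
    · exact Or.inl ⟨i, rfl⟩
    · exact Or.inr ⟨i, rfl⟩

lemma legSet_subset_sdiff_tip (hM : IsSpike M r t x y C3) : legSet x y I J ⊆ M.E \ {t} :=
  hM.legSet_univ ▸ legSet_subset_iff.2
    ⟨fun i _ => hM.x_mem_legSet.2 (Finset.mem_univ i),
      fun j _ => hM.y_mem_legSet.2 (Finset.mem_univ j)⟩

lemma legSet_subset_ground (hM : IsSpike M r t x y C3) : legSet x y I J ⊆ M.E :=
  hM.legSet_subset_sdiff_tip.trans sdiff_subset

lemma sdiff_legSet (hM : IsSpike M r t x y C3) :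
    (M.E \ {t}) \ legSet x y I J = legSet x y Iᶜ Jᶜ := by
  ext a
  rw [← hM.legSet_univ]
  constructor
  · rintro ⟨⟨i, -, rfl⟩ | ⟨i, -, rfl⟩, h⟩
    · rw [hM.x_mem_legSet] at h ⊢
      exact Finset.mem_compl.2 h
    · rw [hM.y_mem_legSet] at h ⊢
      exact Finset.mem_compl.2 h
  · rintro (⟨i, hi, rfl⟩ | ⟨i, hi, rfl⟩)
    · exact ⟨Or.inl ⟨i, by simp, rfl⟩, hM.x_mem_legSet.not.2 (Finset.mem_compl.1 hi)⟩
    · exact ⟨Or.inr ⟨i, by simp, rfl⟩, hM.y_mem_legSet.not.2 (Finset.mem_compl.1 hi)⟩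

lemma not_indep_of_ncard_eq (hM : IsSpike M r t x y C3) {Z : Set α} (hZE : Z ⊆ M.E)
    (hZ : Z.ncard = r + 1) : ¬ M.Indep Z := by
  intro hind
  have hfree : ∀ C, IsCircuitOf M C → ¬ C ⊆ Z := fun C hC hCZ => hC.2.1 (hind.subset hCZ)
  refine hfree Z ((hM.circuits Z).2 (Or.inr (Or.inr (Or.inr ⟨hZE, hZ, ?_, ?_, ?_⟩)))) subset_rfl
  · exact fun i => hfree _ ((hM.circuits _).2 (Or.inl ⟨i, rfl⟩))
  · exact fun i j hij => hfree _ ((hM.circuits _).2 (Or.inr (Or.inl ⟨i, j, hij, rfl⟩)))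
  · exact fun C hC => hfree C ((hM.circuits C).2 (Or.inr (Or.inr (Or.inl hC))))

lemma isBase_of_indep_of_ncard_eq (hM : IsSpike M r t x y C3) {Z : Set α} (hZ : M.Indep Z)
    (hcard : Z.ncard = r) : M.IsBase Z := by
  have hfin : Z.Finite := finite_of_ncard_pos (by have := hM.hr; omega)
  refine hZ.isBase_of_forall_insert fun e he => hM.not_indep_of_ncard_eq ?_ ?_
  · exact insert_subset he.1 hZ.subset_ground
  · rw [ncard_insert_of_notMem he.2 hfin, hcard]

lemma indep_legSet (hM : IsSpike M r t x y C3) {j : Fin r} (hcard : I.card + J.card = r)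
    (hIJ : I ∩ J = {j}) : M.Indep (legSet x y I J) := by
  have hmem : ∀ k, x k ∈ legSet x y I J ∧ y k ∈ legSet x y I J ↔ k = j := fun k => by
    rw [hM.x_mem_legSet, hM.y_mem_legSet, ← Finset.mem_inter, hIJ, Finset.mem_singleton]
  by_contra hdep
  obtain ⟨C, hCZ, hC⟩ := Dep.exists_isCircuit_subset ⟨hdep, hM.legSet_subset_ground⟩
  rcases (hM.circuits C).1 hC.isCircuitOf with ⟨i, rfl⟩ | ⟨i, k, hik, rfl⟩ | hC3 | ⟨-, hC, -⟩
  · exact (hM.legSet_subset_sdiff_tip (hCZ (mem_insert t _))).2 rfl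
  · have hi := (hmem i).1 ⟨hCZ (by simp), hCZ (by simp)⟩
    have hk := (hmem k).1 ⟨hCZ (by simp), hCZ (by simp)⟩
    exact hik (hi.trans hk.symm)
  · obtain ⟨-, hCcard, hCleg⟩ := hM.hC3 C hC3
    have hCZ : C = legSet x y I J :=
      eq_of_subset_of_ncard_le hCZ (by rw [hCcard, hM.ncard_legSet, hcard]) finite_legSet
    have := hCleg j
    rw [hCZ, inter_eq_self_of_subset_right (pair_subset_iff.2 ((hmem j).2 rfl)),
      ncard_pair (hM.x_ne_y j j)] at this
    exact absurd this (by norm_num)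
  · have := ncard_le_ncard hCZ finite_legSet
    rw [hC, hM.ncard_legSet, hcard] at this
    omega

lemma isBase_legSet (hM : IsSpike M r t x y C3) {j : Fin r} (hcard : I.card + J.card = r)
    (hIJ : I ∩ J = {j}) : M.IsBase (legSet x y I J) :=
  hM.isBase_of_indep_of_ncard_eq (hM.indep_legSet hcard hIJ) (by rw [hM.ncard_legSet, hcard])

lemma finsum_mem_sdiff_tip {β : Type*} [AddCommMonoid β] (hM : IsSpike M r t x y C3)
    (w : α → β) : ∑ᶠ a ∈ M.E \ {t}, w a = ∑ i, (w (x i) + w (y i)) := by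
  rw [← hM.legSet_univ, hM.finsum_mem_legSet, Finset.sum_add_distrib]

lemma eq_legSets_of_partition (hM : IsSpike M r t x y C3) {R B : Set α} (hR : M.IsBase R)
    (hd : Disjoint R B) (hU : R ∪ B = M.E \ {t}) {a l : Fin r} (hal : a ≠ l)
    (hx : ∀ i, i ≠ l → x i ∈ R) (hy : y a ∈ R) :
    R = legSet x y (Finset.univ.erase l) {a} ∧ B = legSet x y {l} (Finset.univ.erase a) := by
  have hRl : R = legSet x y (Finset.univ.erase l) {a} := by
    refine ((hM.isBase_legSet (j := a) ?_ ?_).eq_of_subset_isBase hR ?_).symm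
    · have := hM.hr
      simp [Finset.card_erase_of_mem]
      omega
    · grind
    · exact legSet_subset_iff.2 ⟨fun i hi => hx i (Finset.ne_of_mem_erase hi),
        fun j hj => Finset.mem_singleton.1 hj ▸ hy⟩
  refine ⟨hRl, ?_⟩
  rw [← union_sdiff_cancel_left hd.inter_eq.subset, hU, hRl, hM.sdiff_legSet]
  simp [Finset.compl_erase, Finset.compl_singleton]

lemma symExchSeq_swapLegs (hM : IsSpike M r t x y C3) {a b l : Fin r} (hab : a ≠ b)
    (hal : a ≠ l) (hbl : b ≠ l) :
    SymExchSeq M (legSet x y (Finset.univ.erase l) {a}, legSet x y {l} (Finset.univ.erase a))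
      [(x a, y b), (y a, x l), (y b, y l)]
      (legSet x y (Finset.univ.erase a) {l}, legSet x y {a} (Finset.univ.erase l)) := by
  refine symExchSeq_cons (R' := legSet x y ((Finset.univ.erase l).erase a) {b, a})
    (B' := legSet x y {a, l} ((Finset.univ.erase a).erase b))
    (hM.x_mem_legSet.2 (by simp [hal])) (hM.y_mem_legSet.2 (by simp [hab.symm]))
    (by rw [hM.legSet_sdiff_x, insert_y_legSet]) (by rw [hM.legSet_sdiff_y, insert_x_legSet])
    (hM.isBase_legSet (j := b) ?_ ?_) (hM.isBase_legSet (j := l) ?_ ?_) <|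
    symExchSeq_cons (R' := legSet x y (Finset.univ.erase a) {b})
    (B' := legSet x y {a} (Finset.univ.erase b))
    (hM.y_mem_legSet.2 (by simp)) (hM.x_mem_legSet.2 (by simp))
    (by rw [hM.legSet_sdiff_y, insert_x_legSet]; congr 1 <;> grind)
    (by rw [hM.legSet_sdiff_x, insert_y_legSet]; congr 1 <;> grind)
    (hM.isBase_legSet (j := b) ?_ ?_) (hM.isBase_legSet (j := a) ?_ ?_) <|
    symExchSeq_cons (hM.y_mem_legSet.2 (by simp)) (hM.y_mem_legSet.2 (by simp [hbl.symm]))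
    (by rw [hM.legSet_sdiff_y, insert_y_legSet]; congr 1; grind)
    (by rw [hM.legSet_sdiff_y, insert_y_legSet]; congr 1; grind)
    (hM.isBase_legSet (j := l) ?_ ?_) (hM.isBase_legSet (j := a) ?_ ?_) rfl
  -- remaining goals: every intermediate set has `r` elements and exactly one full leg
  all_goals first
    | grind
    | (simp [Finset.card_erase_of_mem, hab.symm, hal]; omega)

end IsSpike

theorem stmt17_general (M : Matroid α) (r : ℕ) (t : α) (x y : Fin r → α) (C3 : Set (Set α))
    (hM : IsSpike M r t x y C3) (w : α → NNReal)
    (i₀ i₁ iₗ : Fin r) (hi₀ : (i₀ : ℕ) = 0) (hi₁ : (i₁ : ℕ) = 1) (hiₗ : (iₗ : ℕ) = r - 1)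
    (R₁ B₁ R₂ B₂ : Set α)
    (hR₁ : M.IsBase R₁) (hd₁ : Disjoint R₁ B₁)
    (hR₂ : M.IsBase R₂) (hd₂ : Disjoint R₂ B₂)
    (hU₁ : R₁ ∪ B₁ = M.E \ {t}) (hU₂ : R₂ ∪ B₂ = M.E \ {t})
    (hleg₁R : ({x i₀, y i₀} : Set α) ⊆ R₁)
    (hlegrR : ({x iₗ, y iₗ} : Set α) ⊆ R₂)
    (hsame : ∀ i, i ≠ i₀ → i ≠ iₗ → (x i ∈ R₁ ↔ x i ∈ R₂))
    (hred : ∀ i, i ≠ i₀ → i ≠ iₗ → x i ∈ R₁)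
    (hw : w (y i₁) ≤ w (x i₁)) :
    SymExchSeq M (R₁, B₁) [(x i₀, y i₁), (y i₀, x iₗ), (y i₁, y iₗ)] (R₂, B₂) ∧
      ([(x i₀, y i₁), (y i₀, x iₗ), (y i₁, y iₗ)] : List (α × α)).length = 3 ∧ 3 ≤ r ∧
      seqWeight w [(x i₀, y i₁), (y i₀, x iₗ), (y i₁, y iₗ)] ≤ ∑ᶠ a ∈ M.E \ {t}, w a := by
  have h01 : i₀ ≠ i₁ := Fin.ne_of_val_ne (by omega)
  have h0l : i₀ ≠ iₗ := Fin.ne_of_val_ne (by have := hM.hr; omega)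
  have h1l : i₁ ≠ iₗ := Fin.ne_of_val_ne (by have := hM.hr; omega)
  have hxR₁ : ∀ i, i ≠ iₗ → x i ∈ R₁ := fun i hi =>
    if hi₀ : i = i₀ then hi₀ ▸ hleg₁R (mem_insert _ _) else hred i hi₀ hi
  have hxR₂ : ∀ i, i ≠ i₀ → x i ∈ R₂ := fun i hi =>
    if hiₗ : i = iₗ then hiₗ ▸ hlegrR (mem_insert _ _) else (hsame i hi hiₗ).1 (hred i hi hiₗ)
  obtain ⟨rfl, rfl⟩ := hM.eq_legSets_of_partition hR₁ hd₁ hU₁ h0l hxR₁ (hleg₁R (by simp))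
  obtain ⟨rfl, rfl⟩ := hM.eq_legSets_of_partition hR₂ hd₂ hU₂ h0l.symm hxR₂ (hlegrR (by simp))
  refine ⟨hM.symExchSeq_swapLegs h01 h0l h1l, rfl, hM.hr, ?_⟩
  rw [hM.finsum_mem_sdiff_tip]
  exact seqWeight_le_sum x y w h01 h0l h1l hw

/-- Case 1.4 of the spike lemma: let `(R₁, B₁)`, `(R₂, B₂)` be compatible pairs of
disjoint bases of a rank-`r` spike missing the tip `t`, with `R₁`, `R₂` non-transversal,
`{x 1, y 1} ⊆ R₁ ∩ B₂`, `{x r, y r} ⊆ B₁ ∩ R₂`, all `x i` for `2 ≤ i ≤ r - 1` having the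
same color in `P₁` and `P₂`, namely red, with `r ≥ 3` and `w (y 2) ≤ w (x 2)`. Then the
exchange sequence `(x 1, y 2), (y 1, x r), (y 2, y r)` is feasible and transforms
`(R₁, B₁)` into `(R₂, B₂)`, has length `3 ≤ r`, and has total weight at most
`w (S - t)`. -/
theorem stmt17 (M : Matroid α) (r : ℕ) (t : α) (x y : Fin r → α) (C3 : Set (Set α))
    (hM : IsSpike M r t x y C3) (w : α → NNReal)
    (i₀ i₁ iₗ : Fin r) (hi₀ : (i₀ : ℕ) = 0) (hi₁ : (i₁ : ℕ) = 1) (hiₗ : (iₗ : ℕ) = r - 1)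
    (R₁ B₁ R₂ B₂ : Set α)
    (hR₁ : M.IsBase R₁) (hB₁ : M.IsBase B₁) (hd₁ : Disjoint R₁ B₁)
    (hR₂ : M.IsBase R₂) (hB₂ : M.IsBase B₂) (hd₂ : Disjoint R₂ B₂)
    (hU₁ : R₁ ∪ B₁ = M.E \ {t}) (hU₂ : R₂ ∪ B₂ = M.E \ {t})
    (hleg₁R : ({x i₀, y i₀} : Set α) ⊆ R₁) (hlegrB : ({x iₗ, y iₗ} : Set α) ⊆ B₁)
    (hlegrR : ({x iₗ, y iₗ} : Set α) ⊆ R₂) (hleg₁B : ({x i₀, y i₀} : Set α) ⊆ B₂)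
    (hsame : ∀ i, i ≠ i₀ → i ≠ iₗ → (x i ∈ R₁ ↔ x i ∈ R₂))
    (hred : ∀ i, i ≠ i₀ → i ≠ iₗ → x i ∈ R₁)
    (hw : w (y i₁) ≤ w (x i₁)) :
    SymExchSeq M (R₁, B₁) [(x i₀, y i₁), (y i₀, x iₗ), (y i₁, y iₗ)] (R₂, B₂) ∧
      ([(x i₀, y i₁), (y i₀, x iₗ), (y i₁, y iₗ)] : List (α × α)).length = 3 ∧ 3 ≤ r ∧
      seqWeight w [(x i₀, y i₁), (y i₀, x iₗ), (y i₁, y iₗ)] ≤ ∑ᶠ a ∈ M.E \ {t}, w a :=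
  stmt17_general M r t x y C3 hM w i₀ i₁ iₗ hi₀ hi₁ hiₗ R₁ B₁ R₂ B₂ hR₁ hd₁ hR₂ hd₂ hU₁ hU₂ hleg₁R
    hlegrR hsame hred hw
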